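/- arXiv:2001.07620 — 2 statements merged into one kernel-verified Lean document; each statement's English description precedes it below -/
import Mathlib

section
/- Let σ : ℝ → ℝ, let P be an N×N real permutation matrix, S ∈ ℝ^{N×N}, X ∈ ℝ^{N×F}, and let A_0, …, A_K ∈ ℝ^{F×G} be coefficient matrices. Then the single GCNN layer output satisfies σ( ∑_{k=0}^K (Pᵀ S P)^k (Pᵀ X) A_k ) = Pᵀ σ( ∑_{k=0}^K S^k X A_k ), where σ is applied entrywise. -/
/-!
For a `0`/`1` matrix `P`, the diagonal of `Pᵀ * P` holds the column sums, so `Pᵀ * P = 1`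
forces exactly one `1` in each column and `Pᵀ` selects rows: `Pᵀ * M = M.submatrix f id` for
a function `f`. Reindexing rows commutes with an entrywise map, and `P` is invertible with
inverse `Pᵀ`, so `(Pᵀ S P)^k = Pᵀ S^k P` and the `P Pᵀ` in `(Pᵀ S^k P)(Pᵀ X)` cancels.
-/

open Matrix Finset

theorem Pi.exists_eq_single_of_sum_eq_one {ι R : Type*} [Fintype ι] [DecidableEq ι]
    [AddCommMonoidWithOne R] [CharZero R] {v : ι → R} (h01 : ∀ i, v i = 0 ∨ v i = 1)
    (hsum : ∑ i, v i = 1) : ∃ j, v = Pi.single j 1 := by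
  classical
  have hv : ∀ i, v i = if v i = 1 then 1 else 0 := fun i => by
    rcases h01 i with h | h <;> simp [h]
  have hcard : #{i | v i = 1} = 1 := by
    rw [Finset.sum_congr rfl fun i _ => hv i, Finset.sum_boole] at hsum
    exact_mod_cast hsum
  obtain ⟨j, hj⟩ := Finset.card_eq_one.mp hcard
  refine ⟨j, funext fun i => ?_⟩
  have hmem : v i = 1 ↔ i = j := by simpa using Finset.ext_iff.mp hj i
  rw [hv i, Pi.single_apply]
  exact if_congr hmem rfl rfl

namespace Matrix

variable {m n o R : Type*}

theorem exists_transpose_row_eq_single [Fintype m] [DecidableEq m] [DecidableEq n]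
    [NonAssocSemiring R] [CharZero R] {P : Matrix m n R} (h01 : ∀ i j, P i j = 0 ∨ P i j = 1)
    (hP : Pᵀ * P = 1) (j : n) : ∃ i, Pᵀ j = Pi.single i 1 := by
  refine Pi.exists_eq_single_of_sum_eq_one (fun i => h01 i j) ?_
  have hdiag : ∑ i, P i j * P i j = 1 := by simpa [mul_apply] using congrFun (congrFun hP j) j
  rw [← hdiag]
  refine Finset.sum_congr rfl fun i _ => ?_
  rcases h01 i j with h | h <;> simp [h]

theorem mul_eq_submatrix_of_row_eq_single [Fintype n] [DecidableEq n] [NonAssocSemiring R]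
    {Q : Matrix m n R} {f : m → n} (hQ : ∀ i, Q i = Pi.single (f i) 1) (M : Matrix n o R) :
    Q * M = M.submatrix f id := by
  ext i k
  simp [mul_apply, hQ, Pi.single_apply]

theorem map_mul_of_row_eq_single [Fintype n] [DecidableEq n] [NonAssocSemiring R]
    {Q : Matrix m n R} {f : m → n} (hQ : ∀ i, Q i = Pi.single (f i) 1) (σ : R → R)
    (M : Matrix n o R) : (Q * M).map σ = Q * M.map σ := by
  rw [mul_eq_submatrix_of_row_eq_single hQ, mul_eq_submatrix_of_row_eq_single hQ,
    submatrix_map]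

end Matrix

/-- A single GCNN layer `σ(∑_{k=0}^K S^k X A_k)` (with `σ` applied entrywise) is
permutation equivariant: for a permutation matrix `P` (entries in `{0,1}` with
`Pᵀ * P = 1`), `σ(∑_k (Pᵀ S P)^k (Pᵀ X) A_k) = Pᵀ σ(∑_k S^k X A_k)`. -/
theorem gcnn_layer_permutation_equivariant {N F G K : ℕ} (σ : ℝ → ℝ)
    (P S : Matrix (Fin N) (Fin N) ℝ)
    (hP01 : ∀ i j, P i j = 0 ∨ P i j = 1) (hP : Pᵀ * P = 1)
    (X : Matrix (Fin N) (Fin F) ℝ) (A : ℕ → Matrix (Fin F) (Fin G) ℝ) :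
    (∑ k ∈ Finset.range (K + 1), (Pᵀ * S * P) ^ k * (Pᵀ * X) * A k).map σ
      = Pᵀ * (∑ k ∈ Finset.range (K + 1), S ^ k * X * A k).map σ := by
  have hPPt : P * Pᵀ = 1 := mul_eq_one_comm.mp hP
  have hpow (k : ℕ) : (Pᵀ * S * P) ^ k = Pᵀ * S ^ k * P :=
    Units.conj_pow' ⟨P, Pᵀ, hPPt, hP⟩ S k
  have hterm (k : ℕ) : (Pᵀ * S * P) ^ k * (Pᵀ * X) * A k = Pᵀ * (S ^ k * X * A k) := by
    rw [hpow]
    simp only [Matrix.mul_assoc]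
    rw [← Matrix.mul_assoc P, hPPt, Matrix.one_mul]
  obtain ⟨f, hf⟩ := Classical.axiomOfChoice (exists_transpose_row_eq_single hP01 hP)
  simp only [hterm, ← Matrix.mul_sum]
  exact map_mul_of_row_eq_single hf σ _
end

section
/- (Permutation equivariance of GCNNs.) Let σ : ℝ → ℝ, let P be an N×N real permutation matrix, S ∈ ℝ^{N×N}, and for each layer l = 1, …, L let A_{l,0}, …, A_{l,K} ∈ ℝ^{F_{l-1}×F_l} be coefficient matrices. Define recursively X_0 = X ∈ ℝ^{N×F_0} and X_l = σ( ∑_{k=0}^K S^k X_{l-1} A_{l,k} ), and likewise X'_0 = Pᵀ X and X'_l = σ( ∑_{k=0}^K (Pᵀ S P)^k X'_{l-1} A_{l,k} ), with σ applied entrywise. Then X'_L = Pᵀ X_L; that is, the GCNN output on the permuted graph with permuted input is the permutation of the GCNN output on the original graph. -/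
/-!
A `0/1` matrix `P` with `Pᵀ * P = 1` has exactly one `1` in each column, so `Pᵀ * M` merely
selects rows of `M` and therefore commutes with the entrywise nonlinearity `σ`. Moreover
`Pᵀ * S = (Pᵀ * S * P) * Pᵀ`, so `Pᵀ` carries each graph filter `∑ₖ Sᵏ M Aₖ` to the same filter
on the permuted graph. Induction on the layers finishes the proof.
-/

open Matrix

namespace Matrix

variable {n m R : Type*} [Fintype n] [DecidableEq n] [Semiring R]

theorem exists_transpose_eq_one_submatrix_of_zero_one [CharZero R]
    {P : Matrix n n R} (hP01 : ∀ i j, P i j = 0 ∨ P i j = 1) (hP : Pᵀ * P = 1) :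
    ∃ f : n → n, Pᵀ = (1 : Matrix n n R).submatrix f id := by
  -- On `0/1` entries `x * x = x`, so the diagonal of `Pᵀ * P` counts the ones in a column.
  have hcol : ∀ i, ∃ t, ∀ s, P s i = 1 ↔ s = t := by
    classical
    intro i
    have hsq : ∀ s, P s i * P s i = if P s i = 1 then 1 else 0 := fun s => by
      rcases hP01 s i with h | h <;> simp [h]
    have hdiag := congrFun (congrFun hP i) i
    simp only [mul_apply, transpose_apply, one_apply_eq, hsq, Finset.sum_boole,
      Nat.cast_eq_one, Finset.card_eq_one] at hdiag
    obtain ⟨t, ht⟩ := hdiag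
    exact ⟨t, fun s => by simpa using congrArg (s ∈ ·) ht⟩
  choose f hf using hcol
  refine ⟨f, ext fun i s => ?_⟩
  by_cases hs : s = f i
  · subst hs
    rw [transpose_apply, submatrix_apply, id, one_apply_eq, (hf i _).mpr rfl]
  · simp [Ne.symm hs, (hP01 s i).resolve_right ((hf i s).not.mpr hs)]

theorem transpose_mul_map_of_zero_one [CharZero R] {P : Matrix n n R}
    (hP01 : ∀ i j, P i j = 0 ∨ P i j = 1) (hP : Pᵀ * P = 1) (σ : R → R) (M : Matrix n m R) :
    Pᵀ * M.map σ = (Pᵀ * M).map σ := by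
  obtain ⟨f, hf⟩ := exists_transpose_eq_one_submatrix_of_zero_one hP01 hP
  have hsel (M' : Matrix n m R) : (1 : Matrix n n R).submatrix f id * M' = M'.submatrix f id := by
    simpa using one_submatrix_mul f (Equiv.refl n) M'
  rw [hf, hsel, hsel, submatrix_map]

theorem sum_conj_pow_mul_mul {o : Type*} [Fintype m] {P S : Matrix n n R} (hP : P * Pᵀ = 1)
    (s : Finset ℕ) (A : ℕ → Matrix m o R) (M : Matrix n m R) :
    ∑ k ∈ s, (Pᵀ * S * P) ^ k * (Pᵀ * M) * A k = Pᵀ * ∑ k ∈ s, S ^ k * M * A k := by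
  have hconj : SemiconjBy Pᵀ S (Pᵀ * S * P) := by
    rw [SemiconjBy, Matrix.mul_assoc _ P, hP, Matrix.mul_one]
  simp only [Matrix.mul_sum, ← Matrix.mul_assoc, (hconj.pow_right _).eq]

end Matrix

/-- Permutation equivariance of GCNNs. Let `P` be an `N × N` permutation matrix
(entries in `{0,1}` with `Pᵀ * P = 1`), `S ∈ ℝ^{N×N}` a shift operator, `F l` the
feature dimension of layer `l`, and `A l k ∈ ℝ^{F l × F (l+1)}` the coefficient
matrices of layer `l + 1`. If `X` follows the GCNN recursion
`X (l+1) = σ(∑_{k=0}^K S^k (X l) (A l k))` and `X'` follows the same recursion on the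
permuted graph `Pᵀ S P` with permuted input `X' 0 = Pᵀ X 0`, then `X' L = Pᵀ X L`. -/
theorem gcnn_permutation_equivariant {N K L : ℕ} (σ : ℝ → ℝ)
    (P S : Matrix (Fin N) (Fin N) ℝ)
    (hP01 : ∀ i j, P i j = 0 ∨ P i j = 1) (hP : Pᵀ * P = 1)
    (F : ℕ → ℕ) (A : (l : ℕ) → ℕ → Matrix (Fin (F l)) (Fin (F (l + 1))) ℝ)
    (X X' : (l : ℕ) → Matrix (Fin N) (Fin (F l)) ℝ)
    (hX : ∀ l, X (l + 1) = (∑ k ∈ Finset.range (K + 1), S ^ k * X l * A l k).map σ)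
    (hX' : ∀ l, X' (l + 1)
      = (∑ k ∈ Finset.range (K + 1), (Pᵀ * S * P) ^ k * X' l * A l k).map σ)
    (h0 : X' 0 = Pᵀ * X 0) :
    X' L = Pᵀ * X L := by
  induction L with
  | zero => exact h0
  | succ l ih =>
    rw [hX' l, ih, sum_conj_pow_mul_mul (mul_eq_one_comm.mp hP), hX l,
      transpose_mul_map_of_zero_one hP01 hP]
end
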